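/- Let p, q, r > 1 satisfy 1/p + 1/q = 1 + 1/r. For f ∈ L^p(ℝ) and g ∈ L^q(ℝ), the Hartley convolution f ∗_{H₁} g belongs to L^r(ℝ) and ‖f ∗_{H₁} g‖_{L^r(ℝ)} ≤ √(2/π) ‖f‖_{L^p(ℝ)} ‖g‖_{L^q(ℝ)}. -/

import Mathlib

open MeasureTheory Real Complex Filter Topology

noncomputable def Hconv (f g : ℝ → ℂ) (x : ℝ) : ℂ :=
  (1 / (2 * Real.sqrt (2 * Real.pi))) *
    ∫ y : ℝ, f y * (g (x + y) + g (x - y) + g (-x + y) - g (-x - y))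

/-!
Substituting `y ↦ -y` in the terms `g (x + y)` and `g (-x + y)` writes the Hartley convolution
almost everywhere as `(u x + v x + u (-x) - v (-x)) / (2 √(2π))` with `u = f̌ ⋆ g`, `v = f ⋆ g` and
`f̌ y = f (-y)`. Each of the four terms has `L^r` norm at most `‖f‖_p ‖g‖_q` by Young's convolution
inequality, and `4 / (2 √(2π)) = √(2/π)`.

Young's inequality holds on any abelian group with an invariant measure. The three-factor Hölder
inequality with exponents `1/r`, `1 - 1/q`, `1 - 1/p`, applied to
`|f y| |g (x - y)| = (|f y|^p |g (x - y)|^q)^(1/r) · (|f y|^p)^(1 - 1/q) · (|g (x - y)|^q)^(1 - 1/p)`,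
bounds `(|f| ⋆ |g|) x ^ r` by `(|f|^p ⋆ |g|^q) x · ‖f‖_p^(r - p) ‖g‖_q^(r - q)`, and by Tonelli
`|f|^p ⋆ |g|^q` has integral `‖f‖_p^p ‖g‖_q^q`.
-/

open scoped ENNReal Convolution

lemma MeasureTheory.eLpNorm_ofReal_eq_lintegral_rpow {α : Type*} [MeasurableSpace α]
    {μ : Measure α} {K : α → ℝ≥0∞} {s : ℝ} (hs : 0 < s) :
    eLpNorm K (ENNReal.ofReal s) μ = (∫⁻ x, K x ^ s ∂μ) ^ (1 / s) := by
  rw [eLpNorm_eq_lintegral_rpow_enorm_toReal (by simpa using hs) ENNReal.ofReal_ne_top,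
    ENNReal.toReal_ofReal hs.le]
  rfl

lemma ENNReal.self_mul_rpow_rpow {s r : ℝ} (hs : 0 ≤ s) (hr : 0 ≤ r) (X : ℝ≥0∞) :
    X * (X ^ s) ^ r = X ^ (1 + s * r) := by
  rw [← ENNReal.rpow_mul, ENNReal.rpow_add_of_nonneg _ _ zero_le_one (mul_nonneg hs hr),
    ENNReal.rpow_one]

structure YoungExponents (p q r : ℝ) : Prop where
  one_le_left : 1 ≤ p
  one_le_right : 1 ≤ q
  pos : 0 < r
  inv_add_inv : 1 / p + 1 / q = 1 + 1 / r

namespace YoungExponents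

variable {p q r : ℝ}

lemma pos_left (h : YoungExponents p q r) : 0 < p := by linarith [h.one_le_left]

lemma pos_right (h : YoungExponents p q r) : 0 < q := by linarith [h.one_le_right]

lemma one_sub_one_div_left_nonneg (h : YoungExponents p q r) : 0 ≤ 1 - 1 / p :=
  sub_nonneg.2 ((div_le_one h.pos_left).2 h.one_le_left)

lemma one_sub_one_div_right_nonneg (h : YoungExponents p q r) : 0 ≤ 1 - 1 / q :=
  sub_nonneg.2 ((div_le_one h.pos_right).2 h.one_le_right)

lemma one_add_mul_eq_div_left (h : YoungExponents p q r) : 1 + (1 - 1 / q) * r = r / p := by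
  have := h.inv_add_inv; have := h.pos_left; have := h.pos_right; have := h.pos
  field_simp at *; linarith

lemma one_add_mul_eq_div_right (h : YoungExponents p q r) : 1 + (1 - 1 / p) * r = r / q := by
  have := h.inv_add_inv; have := h.pos_left; have := h.pos_right; have := h.pos
  field_simp at *; linarith

lemma mul_eq_rpow_mul_rpow_mul_rpow (h : YoungExponents p q r) (u v : ℝ≥0∞) :
    u * v = (u ^ p * v ^ q) ^ (1 / r) * (u ^ p) ^ (1 - 1 / q) * (v ^ q) ^ (1 - 1 / p) := by
  have hr := (one_div_pos.2 h.pos).le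
  have hu : p * (1 / r + (1 - 1 / q)) = 1 := by
    rw [show 1 / r + (1 - 1 / q) = 1 / p by linarith [h.inv_add_inv],
      mul_one_div_cancel h.pos_left.ne']
  have hv : q * (1 / r + (1 - 1 / p)) = 1 := by
    rw [show 1 / r + (1 - 1 / p) = 1 / q by linarith [h.inv_add_inv],
      mul_one_div_cancel h.pos_right.ne']
  rw [mul_assoc, ENNReal.mul_rpow_of_nonneg _ _ hr, ← ENNReal.rpow_mul, ← ENNReal.rpow_mul,
    ← ENNReal.rpow_mul, ← ENNReal.rpow_mul, mul_mul_mul_comm, ← ENNReal.rpow_add_of_nonneg,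
    ← ENNReal.rpow_add_of_nonneg, ← mul_add, ← mul_add, hu, hv, ENNReal.rpow_one, ENNReal.rpow_one]
  exacts [mul_nonneg h.pos_right.le hr, mul_nonneg h.pos_right.le h.one_sub_one_div_left_nonneg,
    mul_nonneg h.pos_left.le hr, mul_nonneg h.pos_left.le h.one_sub_one_div_right_nonneg]

variable {α : Type*} [MeasurableSpace α] {μ : Measure α}

theorem lintegral_mul_le (h : YoungExponents p q r) {F H : α → ℝ≥0∞} (hF : AEMeasurable F μ)
    (hH : AEMeasurable H μ) :
    ∫⁻ y, F y * H y ∂μ ≤ (∫⁻ y, F y ^ p * H y ^ q ∂μ) ^ (1 / r) *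
      (∫⁻ y, F y ^ p ∂μ) ^ (1 - 1 / q) * (∫⁻ y, H y ^ q ∂μ) ^ (1 - 1 / p) := by
  have holder := ENNReal.lintegral_prod_norm_pow_le (μ := μ) Finset.univ
    (f := ![fun y ↦ F y ^ p * H y ^ q, fun y ↦ F y ^ p, fun y ↦ H y ^ q])
    (p := ![1 / r, 1 - 1 / q, 1 - 1 / p]) ?_ ?_ ?_
  · rw [lintegral_congr fun y ↦ h.mul_eq_rpow_mul_rpow_mul_rpow (F y) (H y)]
    simpa [Fin.prod_univ_three] using holder
  · intro i _
    fin_cases i <;> simp <;> fun_prop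
  · have := h.inv_add_inv
    simp only [one_div] at this ⊢
    simp [Fin.sum_univ_three]
    linarith
  · intro i _
    fin_cases i
    · simpa using h.pos.le
    · exact h.one_sub_one_div_right_nonneg
    · exact h.one_sub_one_div_left_nonneg

variable {G : Type*} [MeasurableSpace G] [AddCommGroup G] [MeasurableAdd₂ G] [MeasurableNeg G]
  {μ : Measure G} [SFinite μ] [μ.IsAddLeftInvariant] [μ.IsNegInvariant]

theorem lintegral_lconvolution_rpow_le (h : YoungExponents p q r) {F H : G → ℝ≥0∞}
    (hF : AEMeasurable F μ) (hH : AEMeasurable H μ) :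
    ∫⁻ x, (F ⋆ₗ[μ] H) x ^ r ∂μ ≤ (∫⁻ y, F y ^ p ∂μ) ^ (r / p) * (∫⁻ y, H y ^ q ∂μ) ^ (r / q) := by
  set A := ∫⁻ y, F y ^ p ∂μ
  set B := ∫⁻ y, H y ^ q ∂μ
  set Φ : G → ℝ≥0∞ := fun x ↦ ∫⁻ y, F y ^ p * H (-y + x) ^ q ∂μ
  have hr := h.pos.le
  have reflect (x : G) : ∫⁻ y, H (-y + x) ^ q ∂μ = B := by
    simp_rw [neg_add_eq_sub]; exact lintegral_sub_left_eq_self (H · ^ q) x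
  have pointwise (x : G) : (F ⋆ₗ[μ] H) x ^ r ≤ Φ x * (A ^ (1 - 1 / q) * B ^ (1 - 1 / p)) ^ r := by
    calc (F ⋆ₗ[μ] H) x ^ r
        ≤ (Φ x ^ (1 / r) * A ^ (1 - 1 / q) * B ^ (1 - 1 / p)) ^ r := by
          gcongr
          rw [lconvolution_def, ← reflect x]
          exact h.lintegral_mul_le hF (by fun_prop)
      _ = Φ x * (A ^ (1 - 1 / q) * B ^ (1 - 1 / p)) ^ r := by
          rw [mul_assoc, ENNReal.mul_rpow_of_nonneg _ _ hr, ← ENNReal.rpow_mul,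
            one_div_mul_cancel h.pos.ne', ENNReal.rpow_one]
  have tonelli : ∫⁻ x, Φ x ∂μ = A * B := by
    rw [lintegral_lintegral_swap (by fun_prop)]
    have inner (y : G) : ∫⁻ x, F y ^ p * H (-y + x) ^ q ∂μ = F y ^ p * B := by
      rw [lintegral_const_mul'' _ (by fun_prop), lintegral_add_left_eq_self (H · ^ q) (-y)]
    simp_rw [inner]
    exact lintegral_mul_const'' _ (by fun_prop)
  calc ∫⁻ x, (F ⋆ₗ[μ] H) x ^ r ∂μ
      ≤ ∫⁻ x, Φ x * (A ^ (1 - 1 / q) * B ^ (1 - 1 / p)) ^ r ∂μ := lintegral_mono pointwise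
    _ = A * (A ^ (1 - 1 / q)) ^ r * (B * (B ^ (1 - 1 / p)) ^ r) := by
        rw [lintegral_mul_const'' _ (by fun_prop), tonelli, ENNReal.mul_rpow_of_nonneg _ _ hr]
        ring
    _ = A ^ (r / p) * B ^ (r / q) := by
        rw [ENNReal.self_mul_rpow_rpow h.one_sub_one_div_right_nonneg hr,
          ENNReal.self_mul_rpow_rpow h.one_sub_one_div_left_nonneg hr, h.one_add_mul_eq_div_left,
          h.one_add_mul_eq_div_right]

theorem eLpNorm_lconvolution_le (h : YoungExponents p q r) {F H : G → ℝ≥0∞}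
    (hF : AEMeasurable F μ) (hH : AEMeasurable H μ) :
    eLpNorm (F ⋆ₗ[μ] H) (ENNReal.ofReal r) μ ≤
      eLpNorm F (ENNReal.ofReal p) μ * eLpNorm H (ENNReal.ofReal q) μ := by
  rw [eLpNorm_ofReal_eq_lintegral_rpow h.pos, eLpNorm_ofReal_eq_lintegral_rpow h.pos_left,
    eLpNorm_ofReal_eq_lintegral_rpow h.pos_right]
  calc (∫⁻ x, (F ⋆ₗ[μ] H) x ^ r ∂μ) ^ (1 / r)
      ≤ ((∫⁻ y, F y ^ p ∂μ) ^ (r / p) * (∫⁻ y, H y ^ q ∂μ) ^ (r / q)) ^ (1 / r) := by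
        gcongr
        · exact (one_div_pos.2 h.pos).le
        · exact h.lintegral_lconvolution_rpow_le hF hH
    _ = (∫⁻ y, F y ^ p ∂μ) ^ (1 / p) * (∫⁻ y, H y ^ q ∂μ) ^ (1 / q) := by
        rw [ENNReal.mul_rpow_of_nonneg _ _ (one_div_pos.2 h.pos).le, ← ENNReal.rpow_mul,
          ← ENNReal.rpow_mul, div_mul_div_cancel₀' h.pos.ne', div_mul_div_cancel₀' h.pos.ne']

end YoungExponents

section Convolution

variable {G 𝕜 E E' F : Type*} [MeasurableSpace G] [AddCommGroup G] [NontriviallyNormedField 𝕜]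
  [NormedAddCommGroup E] [NormedSpace 𝕜 E] [NormedAddCommGroup E'] [NormedSpace 𝕜 E']
  [NormedAddCommGroup F] [NormedSpace 𝕜 F]
  (L : E →L[𝕜] E' →L[𝕜] F) {f : G → E} {g : G → E'} {μ : Measure G}

lemma lintegral_enorm_convolution_integrand_le (x : G) :
    ∫⁻ t, ‖L (f t) (g (x - t))‖ₑ ∂μ ≤ ‖L‖ₑ * ((‖f ·‖ₑ) ⋆ₗ[μ] (‖g ·‖ₑ)) x := by
  rw [lconvolution_def, ← lintegral_const_mul' _ _ enorm_ne_top]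
  refine lintegral_mono fun t ↦ ?_
  rw [neg_add_eq_sub, ← mul_assoc]
  exact L.le_opENorm₂ _ _

variable [MeasurableAdd₂ G] [MeasurableNeg G] [SFinite μ] [μ.IsAddLeftInvariant] [μ.IsNegInvariant]
  {p q r : ℝ}

theorem YoungExponents.ae_convolutionExistsAt (h : YoungExponents p q r)
    (hf : MemLp f (ENNReal.ofReal p) μ) (hg : MemLp g (ENNReal.ofReal q) μ) :
    ∀ᵐ x ∂μ, ConvolutionExistsAt f g x L μ := by
  have hK : (∫⁻ x, ((‖f ·‖ₑ) ⋆ₗ[μ] (‖g ·‖ₑ)) x ^ r ∂μ) ^ (1 / r) < ∞ := by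
    rw [← eLpNorm_ofReal_eq_lintegral_rpow h.pos]
    refine (h.eLpNorm_lconvolution_le hf.1.enorm hg.1.enorm).trans_lt ?_
    rw [eLpNorm_enorm, eLpNorm_enorm]
    exact ENNReal.mul_lt_top hf.2 hg.2
  filter_upwards [ae_lt_top' ((aemeasurable_lconvolution hf.1.enorm hg.1.enorm).pow_const r)
    ((ENNReal.rpow_lt_top_iff_of_pos (one_div_pos.2 h.pos)).1 hK).ne] with x hx
  refine ⟨hf.1.convolution_integrand_snd L hg.1 x, ?_⟩
  exact (lintegral_enorm_convolution_integrand_le L x).trans_lt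
    (ENNReal.mul_lt_top enorm_lt_top ((ENNReal.rpow_lt_top_iff_of_pos h.pos).1 hx))

variable [NormedSpace ℝ F]

theorem YoungExponents.eLpNorm_convolution_le (h : YoungExponents p q r)
    (hf : AEStronglyMeasurable f μ) (hg : AEStronglyMeasurable g μ) :
    eLpNorm (f ⋆[L, μ] g) (ENNReal.ofReal r) μ ≤
      ‖L‖ₑ * (eLpNorm f (ENNReal.ofReal p) μ * eLpNorm g (ENNReal.ofReal q) μ) := by
  refine (eLpNorm_le_mul_eLpNorm_of_ae_le_mul'' _
    (aemeasurable_lconvolution hf.enorm hg.enorm).aestronglyMeasurable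
    (ae_of_all _ fun x ↦ (enorm_integral_le_lintegral_enorm _).trans
      (lintegral_enorm_convolution_integrand_le L x))).trans ?_
  rw [← eLpNorm_enorm f, ← eLpNorm_enorm g]
  gcongr
  exact h.eLpNorm_lconvolution_le hf.enorm hg.enorm

theorem YoungExponents.memLp_convolution (h : YoungExponents p q r)
    (hf : MemLp f (ENNReal.ofReal p) μ) (hg : MemLp g (ENNReal.ofReal q) μ) :
    MemLp (f ⋆[L, μ] g) (ENNReal.ofReal r) μ :=
  ⟨(hf.1.convolution_integrand L hg.1).integral_prod_right',
    (h.eLpNorm_convolution_le L hf.1 hg.1).trans_lt <|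
      ENNReal.mul_lt_top enorm_lt_top (ENNReal.mul_lt_top hf.2 hg.2)⟩

end Convolution

section Reflection

variable {G 𝕜 E E' F : Type*} [MeasurableSpace G] [AddCommGroup G] [MeasurableNeg G]
  [NontriviallyNormedField 𝕜] [NormedAddCommGroup E] [NormedSpace 𝕜 E] [NormedAddCommGroup E']
  [NormedSpace 𝕜 E'] [NormedAddCommGroup F] [NormedSpace 𝕜 F]
  (L : E →L[𝕜] E' →L[𝕜] F) {f : G → E} {g : G → E'} {μ : Measure G} [μ.IsNegInvariant]

lemma MeasureTheory.ConvolutionExistsAt.integrable_comp_neg {x : G}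
    (h : ConvolutionExistsAt (fun y ↦ f (-y)) g x L μ) :
    Integrable (fun y ↦ L (f y) (g (x + y))) μ := by
  simpa only [neg_neg, sub_neg_eq_add] using h.integrable.comp_neg

lemma eLpNorm_add_add_comp_neg_sub_comp_neg_le {u v : G → F} {s : ℝ≥0∞} (hs : 1 ≤ s)
    (hu : AEStronglyMeasurable u μ) (hv : AEStronglyMeasurable v μ) :
    eLpNorm (u + v + u ∘ Neg.neg - v ∘ Neg.neg) s μ ≤ 2 * (eLpNorm u s μ + eLpNorm v s μ) := by
  have hneg := Measure.measurePreserving_neg μ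
  calc eLpNorm (u + v + u ∘ Neg.neg - v ∘ Neg.neg) s μ
      ≤ eLpNorm u s μ + eLpNorm v s μ + eLpNorm (u ∘ Neg.neg) s μ +
          eLpNorm (v ∘ Neg.neg) s μ := by
        refine (eLpNorm_sub_le ((hu.add hv).add (hu.comp_measurePreserving hneg))
          (hv.comp_measurePreserving hneg) hs).trans ?_
        gcongr
        refine (eLpNorm_add_le (hu.add hv) (hu.comp_measurePreserving hneg) hs).trans ?_
        gcongr
        exact eLpNorm_add_le hu hv hs
    _ = 2 * (eLpNorm u s μ + eLpNorm v s μ) := by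
        rw [eLpNorm_comp_measurePreserving hu hneg, eLpNorm_comp_measurePreserving hv hneg]
        ring

variable [NormedSpace ℝ F]

lemma convolution_comp_neg_apply (x : G) :
    ((fun y ↦ f (-y)) ⋆[L, μ] g) x = ∫ y, L (f y) (g (x + y)) ∂μ := by
  rw [convolution_def, ← integral_neg_eq_self]
  simp only [neg_neg, sub_neg_eq_add]

end Reflection

section Hartley

open ContinuousLinearMap

lemma Hconv_eq_of_convolutionExistsAt {f g : ℝ → ℂ} {x : ℝ}
    (h₁ : ConvolutionExistsAt (fun y ↦ f (-y)) g x (mul ℂ ℂ) volume)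
    (h₂ : ConvolutionExistsAt f g x (mul ℂ ℂ) volume)
    (h₃ : ConvolutionExistsAt (fun y ↦ f (-y)) g (-x) (mul ℂ ℂ) volume)
    (h₄ : ConvolutionExistsAt f g (-x) (mul ℂ ℂ) volume) :
    Hconv f g x = 1 / (2 * √(2 * π)) * (((fun y ↦ f (-y)) ⋆[mul ℂ ℂ] g) x + (f ⋆[mul ℂ ℂ] g) x +
      ((fun y ↦ f (-y)) ⋆[mul ℂ ℂ] g) (-x) - (f ⋆[mul ℂ ℂ] g) (-x)) := by
  have i₁ := h₁.integrable_comp_neg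
  have i₂ := h₂.integrable
  have i₃ := h₃.integrable_comp_neg
  have i₄ := h₄.integrable
  simp only [mul_apply'] at i₁ i₂ i₃ i₄
  have split : (fun y ↦ f y * (g (x + y) + g (x - y) + g (-x + y) - g (-x - y))) =
      fun y ↦ f y * g (x + y) + f y * g (x - y) + f y * g (-x + y) - f y * g (-x - y) := by
    ext y; ring
  rw [Hconv, convolution_comp_neg_apply, convolution_comp_neg_apply, convolution_mul,
    convolution_mul, split, integral_sub, integral_add, integral_add]
  all_goals first | rfl | assumption | exact i₁.add i₂ | exact (i₁.add i₂).add i₃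

lemma YoungExponents.Hconv_ae_eq {p q r : ℝ} (h : YoungExponents p q r) {f g : ℝ → ℂ}
    (hf : MemLp f (ENNReal.ofReal p)) (hg : MemLp g (ENNReal.ofReal q)) :
    Hconv f g =ᵐ[volume] (1 / (2 * √(2 * π)) : ℂ) •
      (((fun y ↦ f (-y)) ⋆[mul ℂ ℂ] g) + (f ⋆[mul ℂ ℂ] g) +
        ((fun y ↦ f (-y)) ⋆[mul ℂ ℂ] g) ∘ Neg.neg - (f ⋆[mul ℂ ℂ] g) ∘ Neg.neg) := by
  have hneg := Measure.measurePreserving_neg (volume : Measure ℝ)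
  have e₁ := h.ae_convolutionExistsAt (mul ℂ ℂ) (hf.comp_measurePreserving hneg) hg
  have e₂ := h.ae_convolutionExistsAt (mul ℂ ℂ) hf hg
  filter_upwards [e₁, e₂, hneg.quasiMeasurePreserving.ae e₁,
    hneg.quasiMeasurePreserving.ae e₂] with x h₁ h₂ h₃ h₄
  exact Hconv_eq_of_convolutionExistsAt h₁ h₂ h₃ h₄

lemma enorm_hartley_constant_mul_four :
    ‖(1 / (2 * √(2 * π)) : ℂ)‖ₑ * 4 = ENNReal.ofReal √(2 / π) := by
  have hs : 0 < √(2 * π) := by positivity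
  have hnorm : ‖(1 / (2 * √(2 * π)) : ℂ)‖ = 1 / (2 * √(2 * π)) := by
    rw [norm_div, norm_one, norm_mul, Complex.norm_real, Real.norm_of_nonneg hs.le,
      Complex.norm_ofNat]
  rw [← ofReal_norm, hnorm, ← ENNReal.ofReal_ofNat 4, ← ENNReal.ofReal_mul (by positivity)]
  congr 1
  rw [show (2 : ℝ) / π = (2 / √(2 * π)) ^ 2 by
      rw [div_pow, Real.sq_sqrt (by positivity)]; field_simp,
    Real.sqrt_sq (by positivity)]
  field_simp
  norm_num

end Hartley

open ContinuousLinearMap in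
theorem stmt5 (p q r : ℝ) (hp : 1 < p) (hq : 1 < q) (hr : 1 < r)
    (hpqr : 1 / p + 1 / q = 1 + 1 / r)
    (f g : ℝ → ℂ)
    (hf : MemLp f (ENNReal.ofReal p)) (hg : MemLp g (ENNReal.ofReal q)) :
    MemLp (Hconv f g) (ENNReal.ofReal r) ∧
      eLpNorm (Hconv f g) (ENNReal.ofReal r) volume ≤
        ENNReal.ofReal (Real.sqrt (2 / Real.pi)) *
          eLpNorm f (ENNReal.ofReal p) volume * eLpNorm g (ENNReal.ofReal q) volume := by
  have hY : YoungExponents p q r := ⟨hp.le, hq.le, by linarith, hpqr⟩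
  have hneg := Measure.measurePreserving_neg (volume : Measure ℝ)
  have hfr : MemLp (fun y ↦ f (-y)) (ENNReal.ofReal p) := hf.comp_measurePreserving hneg
  have hu := hY.memLp_convolution (mul ℂ ℂ) hfr hg
  have hv := hY.memLp_convolution (mul ℂ ℂ) hf hg
  have young {k : ℝ → ℂ} (hk : MemLp k (ENNReal.ofReal p))
      (hkf : eLpNorm k (ENNReal.ofReal p) volume = eLpNorm f (ENNReal.ofReal p) volume) :
      eLpNorm (k ⋆[mul ℂ ℂ] g) (ENNReal.ofReal r) volume ≤
        eLpNorm f (ENNReal.ofReal p) volume * eLpNorm g (ENNReal.ofReal q) volume := by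
    simpa [opENorm_mul, hkf] using hY.eLpNorm_convolution_le (mul ℂ ℂ) hk.1 hg.1
  have hHconv := hY.Hconv_ae_eq hf hg
  refine ⟨((((hu.add hv).add (hu.comp_measurePreserving hneg)).sub
    (hv.comp_measurePreserving hneg)).const_smul _).ae_eq hHconv.symm, ?_⟩
  rw [eLpNorm_congr_ae hHconv, eLpNorm_const_smul, ← enorm_hartley_constant_mul_four]
  grw [eLpNorm_add_add_comp_neg_sub_comp_neg_le (ENNReal.one_le_ofReal.2 hr.le) hu.1 hv.1,
    young hfr (eLpNorm_comp_measurePreserving hf.1 hneg), young hf rfl]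
  exact le_of_eq (by ring)
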